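/- The unipotent Jonquières group Jonq_u(n) is solvable of derived length exactly n: Jonq_u(n)^(n) is the trivial subgroup, while Jonq_u(n)^(n−1) is nontrivial. -/

import Mathlib

open MvPolynomial

noncomputable section

variable (k : Type*) [Field k] (n : ℕ)

/-- `Asub k n j` is the subalgebra of `k[x_1,…,x_n]` generated by the first `j` variables
`x_1, …, x_j`  (so `Asub k n 0 = k` and `Asub k n n` is everything). -/
def Asub (j : ℕ) : Subalgebra k (MvPolynomial (Fin n) k) :=
  Algebra.adjoin k {P | ∃ i : Fin n, (i : ℕ) < j ∧ P = X i}

/-- The Jonquières subgroup of the automorphism group of affine `n`-space: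
all `k`-algebra automorphisms `φ` of `k[x_1,…,x_n]` with `φ (Asub k n j) = Asub k n j`
for every `j = 1, …, n` (the condition for `j = 0` holds trivially). -/
def Jonq : Subgroup (MvPolynomial (Fin n) k ≃ₐ[k] MvPolynomial (Fin n) k) where
  carrier := {φ | ∀ j ≤ n,
    (Asub k n j).map (φ : MvPolynomial (Fin n) k →ₐ[k] MvPolynomial (Fin n) k) = Asub k n j}
  one_mem' := by
    intro j _
    have h : ((1 : MvPolynomial (Fin n) k ≃ₐ[k] MvPolynomial (Fin n) k) :
        MvPolynomial (Fin n) k →ₐ[k] MvPolynomial (Fin n) k) = AlgHom.id k _ := by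
      ext x; rfl
    rw [h, Subalgebra.map_id]
  mul_mem' := by
    intro φ ψ hφ hψ j hj
    have h : ((φ * ψ : MvPolynomial (Fin n) k ≃ₐ[k] MvPolynomial (Fin n) k) :
        MvPolynomial (Fin n) k →ₐ[k] MvPolynomial (Fin n) k)
        = (φ : MvPolynomial (Fin n) k →ₐ[k] MvPolynomial (Fin n) k).comp
          (ψ : MvPolynomial (Fin n) k →ₐ[k] MvPolynomial (Fin n) k) := by
      ext x; rfl
    rw [h, ← Subalgebra.map_map, hψ j hj, hφ j hj]
  inv_mem' := by
    intro φ hφ j hj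
    conv_lhs => rw [← hφ j hj]
    rw [Subalgebra.map_map]
    have h : ((φ⁻¹ : MvPolynomial (Fin n) k ≃ₐ[k] MvPolynomial (Fin n) k) :
          MvPolynomial (Fin n) k →ₐ[k] MvPolynomial (Fin n) k).comp
          (φ : MvPolynomial (Fin n) k →ₐ[k] MvPolynomial (Fin n) k) = AlgHom.id k _ := by
      exact AlgHom.ext fun x => φ.symm_apply_apply x
    rw [h, Subalgebra.map_id]

lemma mem_Jonq_iff (φ : MvPolynomial (Fin n) k ≃ₐ[k] MvPolynomial (Fin n) k) :
    φ ∈ Jonq k n ↔ ∀ j ≤ n,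
      (Asub k n j).map (φ : MvPolynomial (Fin n) k →ₐ[k] MvPolynomial (Fin n) k)
        = Asub k n j :=
  Iff.rfl

/-- The unipotent Jonquières subgroup: those `φ` in the Jonquières subgroup with
`φ (x_i) - x_i ∈ Asub k n (i-1)` for every `i = 1, …, n` (zero-indexed below). -/
def JonqU : Subgroup (MvPolynomial (Fin n) k ≃ₐ[k] MvPolynomial (Fin n) k) where
  carrier := {φ | φ ∈ Jonq k n ∧ ∀ i : Fin n, φ (X i) - X i ∈ Asub k n (i : ℕ)}
  one_mem' := ⟨(Jonq k n).one_mem, fun i => by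
    simpa using (Asub k n (i : ℕ)).zero_mem⟩
  mul_mem' := by
    rintro φ ψ ⟨hφJ, hφU⟩ ⟨hψJ, hψU⟩
    refine ⟨(Jonq k n).mul_mem hφJ hψJ, fun i => ?_⟩
    have h1 : φ (ψ (X i) - X i) ∈ Asub k n (i : ℕ) := by
      have h := (mem_Jonq_iff k n φ).mp hφJ (i : ℕ) (le_of_lt i.isLt)
      rw [← h]
      exact Subalgebra.mem_map.mpr ⟨_, hψU i, rfl⟩
    have h2 : (φ * ψ) (X i) - X i = φ (ψ (X i) - X i) + (φ (X i) - X i) := by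
      rw [AlgEquiv.mul_apply, map_sub]; ring
    rw [h2]
    exact add_mem h1 (hφU i)
  inv_mem' := by
    rintro φ ⟨hφJ, hφU⟩
    refine ⟨(Jonq k n).inv_mem hφJ, fun i => ?_⟩
    have h1 : φ⁻¹ (φ (X i) - X i) ∈ Asub k n (i : ℕ) := by
      have h := (mem_Jonq_iff k n φ⁻¹).mp ((Jonq k n).inv_mem hφJ) (i : ℕ) (le_of_lt i.isLt)
      rw [← h]
      exact Subalgebra.mem_map.mpr ⟨_, hφU i, rfl⟩
    have h2 : φ⁻¹ (X i) - X i = -(φ⁻¹ (φ (X i) - X i)) := by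
      rw [map_sub]
      have h : φ⁻¹ (φ (X i)) = X i := φ.symm_apply_apply (X i)
      rw [h]; ring
    rw [h2]
    exact neg_mem h1

/-- The iterated derived subgroup `H⁽ᵐ⁾` of a subgroup `H`, taken inside the ambient
group: `H⁽⁰⁾ = H` and `H⁽ᵐ⁺¹⁾ = [H⁽ᵐ⁾, H⁽ᵐ⁾]`. -/
def derivedSub {G : Type*} [Group G] (H : Subgroup G) : ℕ → Subgroup G
  | 0 => H
  | m + 1 => ⁅derivedSub H m, derivedSub H m⁆

variable {k n}

open scoped commutatorElement

lemma Asub_mono {j j' : ℕ} (h : j ≤ j') : Asub k n j ≤ Asub k n j' :=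
  Algebra.adjoin_mono (fun _P ⟨i, hi, hP⟩ => ⟨i, lt_of_lt_of_le hi h, hP⟩)

lemma X_mem_Asub {j : ℕ} {t : Fin n} (h : (t : ℕ) < j) : X t ∈ Asub k n j :=
  Algebra.subset_adjoin ⟨t, h, rfl⟩

lemma C_mem_Asub {j : ℕ} (c : k) : C c ∈ Asub k n j := by
  rw [← MvPolynomial.algebraMap_eq]; exact Subalgebra.algebraMap_mem _ c

lemma algHom_fix (ψ : MvPolynomial (Fin n) k →ₐ[k] MvPolynomial (Fin n) k) {j : ℕ}
    (h : ∀ t : Fin n, (t : ℕ) < j → ψ (X t) = X t) {g} (hg : g ∈ Asub k n j) : ψ g = g := by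
  induction hg using Algebra.adjoin_induction with
  | mem x hx => obtain ⟨i, hi, rfl⟩ := hx; exact h i hi
  | algebraMap r => exact ψ.commutes r
  | add x y _ _ hx hy => rw [map_add, hx, hy]
  | mul x y _ _ hx hy => rw [map_mul, hx, hy]

lemma equiv_fix (φ : MvPolynomial (Fin n) k ≃ₐ[k] MvPolynomial (Fin n) k) {j : ℕ}
    (h : ∀ t : Fin n, (t : ℕ) < j → φ (X t) = X t) {g} (hg : g ∈ Asub k n j) : φ g = g :=
  algHom_fix (φ : MvPolynomial (Fin n) k →ₐ[k] MvPolynomial (Fin n) k) h hg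

lemma algHom_mapsTo (ψ : MvPolynomial (Fin n) k →ₐ[k] MvPolynomial (Fin n) k) {j : ℕ}
    (h : ∀ t : Fin n, (t : ℕ) < j → ψ (X t) ∈ Asub k n j) {g} (hg : g ∈ Asub k n j) :
    ψ g ∈ Asub k n j := by
  induction hg using Algebra.adjoin_induction with
  | mem x hx => obtain ⟨i, hi, rfl⟩ := hx; exact h i hi
  | algebraMap r => rw [ψ.commutes r]; exact Subalgebra.algebraMap_mem _ r
  | add x y _ _ hx hy => rw [map_add]; exact add_mem hx hy
  | mul x y _ _ hx hy => rw [map_mul]; exact mul_mem hx hy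

lemma equiv_mapsTo (φ : MvPolynomial (Fin n) k ≃ₐ[k] MvPolynomial (Fin n) k) {j : ℕ}
    (h : ∀ t : Fin n, (t : ℕ) < j → φ (X t) ∈ Asub k n j) {g} (hg : g ∈ Asub k n j) :
    φ g ∈ Asub k n j :=
  algHom_mapsTo (φ : MvPolynomial (Fin n) k →ₐ[k] MvPolynomial (Fin n) k) h hg

lemma aut_ext {φ ψ : MvPolynomial (Fin n) k ≃ₐ[k] MvPolynomial (Fin n) k}
    (h : ∀ t : Fin n, φ (X t) = ψ (X t)) : φ = ψ := by
  have : (φ : MvPolynomial (Fin n) k →ₐ[k] MvPolynomial (Fin n) k)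
      = (ψ : MvPolynomial (Fin n) k →ₐ[k] MvPolynomial (Fin n) k) :=
    MvPolynomial.algHom_ext h
  exact AlgEquiv.ext fun x => congrArg (fun f : MvPolynomial (Fin n) k →ₐ[k]
    MvPolynomial (Fin n) k => f x) this

/-- auxiliary: composition of two elementary substitutions is the identity when the
added polynomials cancel. -/
lemma eAux_comp (i : Fin n) (f g : MvPolynomial (Fin n) k) (hg : g ∈ Asub k n i)
    (hfg : f + g = 0) :
    (aeval (Function.update X i (X i + f))).comp (aeval (Function.update X i (X i + g)))
      = AlgHom.id k (MvPolynomial (Fin n) k) := by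
  apply MvPolynomial.algHom_ext
  intro t
  simp only [AlgHom.comp_apply, aeval_X, AlgHom.id_apply]
  rcases eq_or_ne t i with rfl | ht
  · rw [Function.update_self, map_add, aeval_X, Function.update_self]
    rw [algHom_fix (aeval (Function.update X t (X t + f))) ?_ hg]
    · rw [add_assoc, hfg, add_zero]
    · intro s hs
      rw [aeval_X, Function.update_of_ne (Fin.ne_of_val_ne (Nat.ne_of_lt hs))]
  · rw [Function.update_of_ne ht, aeval_X, Function.update_of_ne ht]

/-- The elementary automorphism `X i ↦ X i + f`, fixing all other variables,
for `f` a polynomial in the variables before `i`. -/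
def eAut (i : Fin n) (f : MvPolynomial (Fin n) k) (hf : f ∈ Asub k n i) :
    MvPolynomial (Fin n) k ≃ₐ[k] MvPolynomial (Fin n) k :=
  AlgEquiv.ofAlgHom (aeval (Function.update X i (X i + f)))
    (aeval (Function.update X i (X i + -f)))
    (eAux_comp i f (-f) (neg_mem hf) (add_neg_cancel f))
    (eAux_comp i (-f) f hf (neg_add_cancel f))

lemma eAut_apply_X (i : Fin n) (f) (hf : f ∈ Asub k n i) (t : Fin n) :
    eAut i f hf (X t) = if t = i then X i + f else X t := by
  show aeval (Function.update X i (X i + f)) (X t) = _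
  rw [aeval_X, Function.update_apply]

lemma eAut_apply_X_self (i : Fin n) (f) (hf : f ∈ Asub k n i) :
    eAut i f hf (X i) = X i + f := by rw [eAut_apply_X]; simp

lemma eAut_apply_X_ne (i : Fin n) (f) (hf : f ∈ Asub k n i) {t : Fin n} (ht : t ≠ i) :
    eAut i f hf (X t) = X t := by rw [eAut_apply_X]; simp [ht]

lemma eAut_fix (i : Fin n) (f) (hf : f ∈ Asub k n i) {g} (hg : g ∈ Asub k n i) :
    eAut i f hf g = g :=
  equiv_fix _ (fun t ht => eAut_apply_X_ne i f hf (Fin.ne_of_val_ne (Nat.ne_of_lt ht))) hg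

lemma eAut_congr {i : Fin n} {f g} (h : f = g) (hf : f ∈ Asub k n i) (hg : g ∈ Asub k n i) :
    eAut i f hf = eAut i g hg := by subst h; rfl

lemma eAut_mul (i : Fin n) (f g) (hf : f ∈ Asub k n i) (hg : g ∈ Asub k n i) :
    eAut i f hf * eAut i g hg = eAut i (f + g) (add_mem hf hg) := by
  apply aut_ext
  intro t
  rcases eq_or_ne t i with rfl | ht
  · rw [AlgEquiv.mul_apply, eAut_apply_X_self, map_add, eAut_apply_X_self,
      eAut_fix t f hf hg, eAut_apply_X_self, add_assoc]
  · rw [AlgEquiv.mul_apply, eAut_apply_X_ne _ g hg ht, eAut_apply_X_ne _ f hf ht,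
      eAut_apply_X_ne _ _ _ ht]

lemma eAut_zero (i : Fin n) :
    eAut i (0 : MvPolynomial (Fin n) k) (Subalgebra.zero_mem _) = 1 := by
  apply aut_ext
  intro t
  rw [eAut_apply_X]
  split <;> simp_all

lemma eAut_inv (i : Fin n) (f) (hf : f ∈ Asub k n i) :
    (eAut i f hf)⁻¹ = eAut i (-f) (neg_mem hf) := by
  apply inv_eq_of_mul_eq_one_right
  rw [eAut_mul, eAut_congr (add_neg_cancel f) _ (Subalgebra.zero_mem _), eAut_zero]

-- NEW PART
lemma asub_le_map (φ : MvPolynomial (Fin n) k ≃ₐ[k] MvPolynomial (Fin n) k)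
    (hφ : ∀ i : Fin n, φ (X i) - X i ∈ Asub k n (i : ℕ)) (j : ℕ) :
    Asub k n j ≤ (Asub k n j).map
      (φ : MvPolynomial (Fin n) k →ₐ[k] MvPolynomial (Fin n) k) := by
  induction j using Nat.strong_induction_on with
  | _ j IH =>
    refine Algebra.adjoin_le ?_
    rintro P ⟨t, ht, rfl⟩
    have h1 : φ (X t) ∈ (Asub k n j).map
        (φ : MvPolynomial (Fin n) k →ₐ[k] MvPolynomial (Fin n) k) :=
      ⟨X t, X_mem_Asub ht, rfl⟩
    have h2 : φ (X t) - X t ∈ (Asub k n j).map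
        (φ : MvPolynomial (Fin n) k →ₐ[k] MvPolynomial (Fin n) k) :=
      Subalgebra.map_mono (Asub_mono ht.le) (IH t ht (hφ t))
    have h3 := sub_mem h1 h2
    rwa [sub_sub_cancel] at h3

lemma apply_mem_of (φ : MvPolynomial (Fin n) k ≃ₐ[k] MvPolynomial (Fin n) k)
    (hφ : ∀ i : Fin n, φ (X i) - X i ∈ Asub k n (i : ℕ)) {j : ℕ} {g}
    (hg : g ∈ Asub k n j) : φ g ∈ Asub k n j := by
  refine equiv_mapsTo φ (fun t ht => ?_) hg
  have : φ (X t) = X t + (φ (X t) - X t) := by ring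
  rw [this]
  exact add_mem (X_mem_Asub ht) (Asub_mono ht.le (hφ t))

lemma mem_jonqU_of (φ : MvPolynomial (Fin n) k ≃ₐ[k] MvPolynomial (Fin n) k)
    (hφ : ∀ i : Fin n, φ (X i) - X i ∈ Asub k n (i : ℕ)) : φ ∈ JonqU k n := by
  refine ⟨fun j _ => le_antisymm ?_ (asub_le_map φ hφ j), hφ⟩
  rintro x hx
  rw [Subalgebra.mem_map] at hx
  obtain ⟨g, hg, rfl⟩ := hx
  exact apply_mem_of φ hφ hg

lemma eAut_mem_jonqU (i : Fin n) (f) (hf : f ∈ Asub k n i) : eAut i f hf ∈ JonqU k n := by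
  refine mem_jonqU_of _ (fun t => ?_)
  rcases eq_or_ne t i with rfl | ht
  · rw [eAut_apply_X_self, add_sub_cancel_left]; exact hf
  · rw [eAut_apply_X_ne i f hf ht, sub_self]; exact Subalgebra.zero_mem _

lemma shift_mem {i i' : Fin n} (hlt : (i' : ℕ) < i) (c : k) {g}
    (hg : g ∈ Asub k n i) : eAut i' (C c) (C_mem_Asub c) g ∈ Asub k n i := by
  refine equiv_mapsTo _ (fun t ht => ?_) hg
  rcases eq_or_ne t i' with rfl | ht'
  · rw [eAut_apply_X_self]
    exact add_mem (X_mem_Asub hlt) (C_mem_Asub c)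
  · rw [eAut_apply_X_ne _ _ _ ht']
    exact X_mem_Asub ht

lemma eAut_apply_C (i : Fin n) (f) (hf : f ∈ Asub k n i) (d : k) :
    eAut i f hf (C d) = (C d : MvPolynomial (Fin n) k) := by
  have h : (C d : MvPolynomial (Fin n) k) = algebraMap k _ d := by
    rw [MvPolynomial.algebraMap_eq]
  rw [h, AlgEquiv.commutes]

lemma eAut_commutator {i i' : Fin n} (hlt : (i' : ℕ) < i) (g) (hg : g ∈ Asub k n i) (c : k) :
    ⁅eAut i g hg, eAut i' (C c) (C_mem_Asub c)⁆
      = eAut i (g - eAut i' (C c) (C_mem_Asub c) g) (sub_mem hg (shift_mem hlt c hg)) := by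
  have hne : i ≠ i' := Fin.ne_of_val_ne (Nat.ne_of_lt hlt).symm
  apply aut_ext
  intro t
  have hcomm : ∀ x, ⁅eAut i g hg, eAut i' (C c) (C_mem_Asub c)⁆ x
      = eAut i g hg (eAut i' (C c) (C_mem_Asub c)
        ((eAut i g hg)⁻¹ ((eAut i' (C c) (C_mem_Asub c))⁻¹ x))) := by
    intro x
    rw [commutatorElement_def, AlgEquiv.mul_apply, AlgEquiv.mul_apply, AlgEquiv.mul_apply]
  rcases eq_or_ne t i with rfl | hti
  · simp only [hcomm, eAut_inv, eAut_apply_X_ne i' _ _ hne, eAut_apply_X_self, map_add,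
      map_neg, eAut_fix t g hg (shift_mem hlt c hg)]
    ring
  · simp only [hcomm, eAut_inv, eAut_apply_X_ne i _ _ hti]
    rcases eq_or_ne t i' with rfl | hti'
    · simp only [eAut_apply_X_self, map_add, map_neg, eAut_apply_C,
        eAut_apply_X_ne i _ _ hti]
      ring
    · rw [eAut_apply_X_ne i' _ _ hti', eAut_apply_X_ne i _ _ hti,
        eAut_apply_X_ne i' _ _ hti', eAut_apply_X_ne i _ _ hti]

def Kgrp (m : ℕ) : Subgroup (MvPolynomial (Fin n) k ≃ₐ[k] MvPolynomial (Fin n) k) where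
  carrier := {φ | (∀ i : Fin n, φ (X i) - X i ∈ Asub k n (i : ℕ)) ∧
    ∀ j : Fin n, (j : ℕ) < m → φ (X j) = X j}
  one_mem' := ⟨fun i => by simpa using (Asub k n (i : ℕ)).zero_mem, fun j _ => rfl⟩
  mul_mem' := by
    rintro φ ψ ⟨hφ, hφf⟩ ⟨hψ, hψf⟩
    constructor
    · intro i
      have h2 : (φ * ψ) (X i) - X i = φ (ψ (X i) - X i) + (φ (X i) - X i) := by
        rw [AlgEquiv.mul_apply, map_sub]; ring
      rw [h2]
      exact add_mem (apply_mem_of φ hφ (hψ i)) (hφ i)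
    · intro j hj; rw [AlgEquiv.mul_apply, hψf j hj, hφf j hj]
  inv_mem' := by
    rintro φ ⟨hφ, hφf⟩
    constructor
    · intro i
      have h2 : φ⁻¹ (X i) - X i = -(φ⁻¹ (φ (X i) - X i)) := by
        rw [map_sub, (show φ⁻¹ (φ (X i)) = X i from φ.symm_apply_apply _)]; ring
      obtain ⟨y, hy, hyy⟩ := Subalgebra.mem_map.mp (asub_le_map φ hφ i (hφ i))
      have h4 : φ⁻¹ ((φ : MvPolynomial (Fin n) k →ₐ[k] MvPolynomial (Fin n) k) y) = y :=
        φ.symm_apply_apply y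
      rw [h2, ← hyy, h4]
      exact neg_mem hy
    · intro j hj
      have h3 : φ⁻¹ (φ (X j)) = φ⁻¹ (X j) := by rw [hφf j hj]
      have h4 : φ⁻¹ (φ (X j)) = X j := φ.symm_apply_apply _
      rw [h4] at h3
      exact h3.symm

lemma Kgrp_mul_X {m : ℕ} {a b : MvPolynomial (Fin n) k ≃ₐ[k] MvPolynomial (Fin n) k}
    (ha : a ∈ Kgrp m) (hb : b ∈ Kgrp m) {j : Fin n} (hj : (j : ℕ) = m) :
    (a * b) (X j) - X j = (a (X j) - X j) + (b (X j) - X j) := by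
  have hmem : b (X j) - X j ∈ Asub k n m := hj ▸ hb.1 j
  have hfix : a (b (X j) - X j) = b (X j) - X j :=
    equiv_fix a (fun t ht => ha.2 t (by omega)) hmem
  have h : (a * b) (X j) = a (X j + (b (X j) - X j)) := by
    rw [AlgEquiv.mul_apply]; ring_nf
  rw [h, map_add, hfix]
  ring

lemma Kgrp_comm_fix {m : ℕ} {a b : MvPolynomial (Fin n) k ≃ₐ[k] MvPolynomial (Fin n) k}
    (ha : a ∈ Kgrp m) (hb : b ∈ Kgrp m) {j : Fin n} (hj : (j : ℕ) = m) :
    ⁅a, b⁆ (X j) = X j := by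
  have hainv := (Kgrp (k := k) (n := n) m).inv_mem ha
  have hbinv := (Kgrp (k := k) (n := n) m).inv_mem hb
  have hab := (Kgrp (k := k) (n := n) m).mul_mem ha hb
  have haba := (Kgrp (k := k) (n := n) m).mul_mem hab hainv
  have h1 := Kgrp_mul_X ha hb hj
  have h2 := Kgrp_mul_X hab hainv hj
  have h3 := Kgrp_mul_X haba hbinv hj
  have hz1 := Kgrp_mul_X ha hainv hj
  have hz2 := Kgrp_mul_X hb hbinv hj
  rw [mul_inv_cancel a] at hz1
  rw [mul_inv_cancel b] at hz2
  have hone : (1 : MvPolynomial (Fin n) k ≃ₐ[k] MvPolynomial (Fin n) k) (X j) = X j := rfl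
  rw [hone, sub_self] at hz1 hz2
  rw [← sub_eq_zero, commutatorElement_def]
  linear_combination h3 + h2 + h1 - hz1 - hz2

lemma derivedSub_le_Kgrp : ∀ m, derivedSub (JonqU k n) m ≤ Kgrp m
  | 0 => fun φ hφ => ⟨hφ.2, fun j hj => absurd hj (Nat.not_lt_zero _)⟩
  | (m + 1) => by
    show ⁅derivedSub (JonqU k n) m, derivedSub (JonqU k n) m⁆ ≤ Kgrp (m + 1)
    refine Subgroup.commutator_le.mpr (fun a ha b hb => ?_)
    have haK := derivedSub_le_Kgrp m ha
    have hbK := derivedSub_le_Kgrp m hb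
    have habK : ⁅a, b⁆ ∈ Kgrp (k := k) (n := n) m := by
      rw [commutatorElement_def]
      exact mul_mem (mul_mem (mul_mem haK hbK) (inv_mem haK)) (inv_mem hbK)
    refine ⟨habK.1, fun j hj => ?_⟩
    rcases Nat.lt_or_ge (j : ℕ) m with h | h
    · exact habK.2 j h
    · have : (j : ℕ) = m := by omega
      exact Kgrp_comm_fix haK hbK this

lemma derived_n_eq_bot : derivedSub (JonqU k n) n = ⊥ := by
  refine le_antisymm (fun φ hφ => ?_) bot_le
  have h := derivedSub_le_Kgrp n hφ
  have h1 : φ = 1 := aut_ext (fun t => h.2 t t.isLt)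
  simp [Subgroup.mem_bot, h1]

lemma exists_choose_ne_zero (k : Type*) [Field k] (j : ℕ) :
    ∃ d, j < d ∧ (Nat.choose d j : k) ≠ 0 := by
  rcases CharP.char_is_prime_or_zero k (ringChar k) with hp | h0
  · set p := ringChar k with hpdef
    haveI : Fact p.Prime := ⟨hp⟩
    haveI : CharP k p := ringChar.charP k
    obtain ⟨N, hN⟩ : ∃ N, j < p ^ N := ⟨j, Nat.lt_pow_self (n := j) hp.one_lt⟩
    refine ⟨j + p ^ N, by have := pow_pos hp.pos N; omega, ?_⟩
    have hc : (Polynomial.X + 1 : Polynomial k) ^ (j + p ^ N)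
        = (Polynomial.X + 1) ^ j * (Polynomial.X ^ (p ^ N) + 1) := by
      rw [pow_add, add_pow_char_pow, one_pow]
    have h1 := congrArg (fun q : Polynomial k => q.coeff j) hc
    simp only [Polynomial.coeff_X_add_one_pow, mul_add, mul_one, Polynomial.coeff_add] at h1
    rw [Polynomial.coeff_mul_X_pow', if_neg (by omega)] at h1
    rw [h1]
    simp
  · haveI : CharP k 0 := by rw [← h0]; exact ringChar.charP k
    haveI : CharZero k := CharP.charP_to_charZero k
    exact ⟨j + 1, lt_add_one j, by
      rw [Nat.choose_succ_self_right]
      exact Nat.cast_ne_zero.mpr (Nat.succ_ne_zero j)⟩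

lemma mem_of_forall_sum_mem {K : Type*} [Field K] [Infinite K] {V : Type*} [AddCommGroup V]
    [Module K V] (M : Submodule K V) (E : ℕ) (w : ℕ → V)
    (h : ∀ c : K, (∑ e ∈ Finset.range E, c ^ e • w e) ∈ M) :
    ∀ e < E, w e ∈ M := by
  intro e he
  have hq : ∀ c : K, (∑ e ∈ Finset.range E, c ^ e • M.mkQ (w e)) = 0 := by
    intro c
    have : ∑ e ∈ Finset.range E, c ^ e • M.mkQ (w e)
        = M.mkQ (∑ e ∈ Finset.range E, c ^ e • w e) := by
      rw [map_sum]
      exact Finset.sum_congr rfl fun e _ => (map_smul _ _ _).symm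
    rw [this, Submodule.mkQ_apply, Submodule.Quotient.mk_eq_zero]
    exact h c
  suffices hz : M.mkQ (w e) = 0 by
    rwa [Submodule.mkQ_apply, Submodule.Quotient.mk_eq_zero] at hz
  rw [← Module.forall_dual_apply_eq_zero_iff K]
  intro φ
  set p : Polynomial K :=
    ∑ e ∈ Finset.range E, Polynomial.C (φ (M.mkQ (w e))) * Polynomial.X ^ e with hp
  have hpe : ∀ c, p.eval c = 0 := by
    intro c
    have h2 := congrArg φ (hq c)
    rw [map_sum, map_zero] at h2
    simp only [map_smul, smul_eq_mul] at h2
    rw [hp, Polynomial.eval_finset_sum, ← h2]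
    exact Finset.sum_congr rfl fun e _ => by
      rw [Polynomial.eval_mul, Polynomial.eval_C, Polynomial.eval_pow, Polynomial.eval_X,
        mul_comm]
  have hp0 : p = 0 := Polynomial.funext (by simp [hpe])
  have hce : p.coeff e = φ (M.mkQ (w e)) := by
    rw [hp, Polynomial.finset_sum_coeff, Finset.sum_eq_single e]
    · rw [Polynomial.coeff_C_mul, Polynomial.coeff_X_pow, if_pos rfl, mul_one]
    · intro b _ hb
      rw [Polynomial.coeff_C_mul, Polynomial.coeff_X_pow, if_neg (fun h => hb h.symm), mul_zero]
    · intro he'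
      exact absurd (Finset.mem_range.mpr he) he'
  rw [hp0, Polynomial.coeff_zero] at hce
  exact hce.symm

lemma X_pow_mem_diff_span {k : Type*} [Field k] [Infinite k] {n : ℕ} (i' : Fin n) (j : ℕ) :
    (X i' ^ j : MvPolynomial (Fin n) k) ∈ Submodule.span k
      {q | ∃ (c : k) (d : ℕ), q = (X i' + C c) ^ d - X i' ^ d} := by
  obtain ⟨d, hjd, hd⟩ := exists_choose_ne_zero k j
  set M := Submodule.span k {q : MvPolynomial (Fin n) k |
    ∃ (c : k) (d : ℕ), q = (X i' + C c) ^ d - X i' ^ d} with hM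
  set w : ℕ → MvPolynomial (Fin n) k :=
    fun e => if e = 0 then 0 else (d.choose (d - e) : k) • X i' ^ (d - e) with hw
  have hbin : ∀ c : k, (X i' + C c) ^ d - X i' ^ d
      = ∑ e ∈ Finset.range (d + 1), c ^ e • w e := by
    intro c
    rw [add_pow, Finset.sum_range_succ]
    simp only [Nat.sub_self, pow_zero, mul_one, Nat.choose_self, Nat.cast_one]
    rw [add_sub_cancel_right, ← Finset.sum_range_reflect (fun e => c ^ e • w e) (d + 1)]
    simp only [Nat.add_sub_cancel]
    rw [Finset.sum_range_succ, Nat.sub_self]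
    rw [show w 0 = 0 from if_pos rfl, smul_zero, add_zero]
    refine Finset.sum_congr rfl fun e he => ?_
    have hed : e < d := Finset.mem_range.mp he
    have hwde : w (d - e) = (d.choose e : k) • X i' ^ e := by
      rw [hw]
      simp only
      rw [if_neg (by omega), Nat.sub_sub_self hed.le]
    rw [hwde, smul_smul, smul_eq_C_mul, map_mul, map_pow, C_eq_coe_nat]
    ring
  have hsum : ∀ c : k, (∑ e ∈ Finset.range (d + 1), c ^ e • w e) ∈ M := fun c => by
    rw [← hbin c]; exact Submodule.subset_span ⟨c, d, rfl⟩
  have hmem := mem_of_forall_sum_mem M (d + 1) w hsum (d - j) (by omega)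
  have hwdj : w (d - j) = (d.choose j : k) • X i' ^ j := by
    rw [hw]
    simp only
    rw [if_neg (by omega), Nat.sub_sub_self hjd.le]
  rw [hwdj] at hmem
  exact (Submodule.smul_mem_iff M hd).mp hmem


open Pointwise in
lemma Asub_le_mul_span {i i' : Fin n} (hsucc : (i : ℕ) = (i' : ℕ) + 1) {g}
    (hg : g ∈ Asub k n i) :
    g ∈ Submodule.span k {q : MvPolynomial (Fin n) k |
      ∃ h ∈ Asub k n i', ∃ j : ℕ, q = h * X i' ^ j} := by
  set S := {q : MvPolynomial (Fin n) k | ∃ h ∈ Asub k n i', ∃ j : ℕ, q = h * X i' ^ j} with hS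
  set N := Submodule.span k S with hN
  have hmul : ∀ x ∈ N, ∀ y ∈ N, x * y ∈ N := by
    intro x hx y hy
    have h1 : x * y ∈ N * N := Submodule.mul_mem_mul hx hy
    have h2 : N * N = Submodule.span k (S * S) := Submodule.span_mul_span k S S
    have h3 : S * S ⊆ S := by
      rintro q ⟨q1, ⟨h1', hh1, j1, rfl⟩, q2, ⟨h2', hh2, j2, rfl⟩, rfl⟩
      exact ⟨h1' * h2', mul_mem hh1 hh2, j1 + j2, by ring⟩
    rw [h2] at h1
    exact Submodule.span_le.mpr (le_trans h3 Submodule.subset_span) h1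
  induction hg using Algebra.adjoin_induction with
  | mem x hx =>
    obtain ⟨t, ht, rfl⟩ := hx
    rcases Nat.lt_or_ge (t : ℕ) (i' : ℕ) with h | h
    · exact Submodule.subset_span ⟨X t, X_mem_Asub h, 0, by ring⟩
    · have : t = i' := Fin.ext (by omega)
      subst this
      exact Submodule.subset_span ⟨1, one_mem _, 1, by ring⟩
  | algebraMap r =>
    refine Submodule.subset_span ⟨algebraMap k _ r, Subalgebra.algebraMap_mem _ r, 0, by ring⟩
  | add x y _ _ hx hy => exact add_mem hx hy
  | mul x y _ _ hx hy => exact hmul x hx y hy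

lemma eAut_mem_derived [Infinite k] :
    ∀ m : ℕ, ∀ i : Fin n, m ≤ (i : ℕ) → ∀ f (hf : f ∈ Asub k n i),
      eAut i f hf ∈ derivedSub (JonqU k n) m
  | 0 => fun i _ f hf => eAut_mem_jonqU i f hf
  | (m + 1) => by
    intro i hi f hf
    have hin : (i : ℕ) < n := i.isLt
    set i' : Fin n := ⟨(i : ℕ) - 1, by omega⟩ with hi'
    have hval : (i' : ℕ) = (i : ℕ) - 1 := rfl
    have hlt : (i' : ℕ) < (i : ℕ) := by omega
    have hsucc : (i : ℕ) = (i' : ℕ) + 1 := by omega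
    have hmle : m ≤ (i' : ℕ) := by omega
    set D := derivedSub (JonqU k n) (m + 1) with hD
    -- Step A: commutator generators lie in D
    have stepA : ∀ g (hg : g ∈ Asub k n i) (c : k),
        eAut i (g - eAut i' (C c) (C_mem_Asub c) g)
          (sub_mem hg (shift_mem hlt c hg)) ∈ D := by
      intro g hg c
      rw [← eAut_commutator hlt g hg c, hD,
        show derivedSub (JonqU k n) (m + 1)
          = ⁅derivedSub (JonqU k n) m, derivedSub (JonqU k n) m⁆ from rfl]
      exact Subgroup.commutator_mem_commutator
        (eAut_mem_derived m i (by omega) g hg)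
        (eAut_mem_derived m i' hmle (C c) (C_mem_Asub c))
    -- Step B: span closure
    set M0 := Submodule.span k {q : MvPolynomial (Fin n) k |
      ∃ g ∈ Asub k n i, ∃ c : k, q = g - eAut i' (C c) (C_mem_Asub c) g} with hM0
    have stepB : ∀ f ∈ M0, ∀ a : k, ∃ h : a • f ∈ Asub k n i, eAut i (a • f) h ∈ D := by
      intro f hf
      induction hf using Submodule.span_induction with
      | mem x hx =>
        obtain ⟨g, hg, c, rfl⟩ := hx
        intro a
        have heq : a • (g - eAut i' (C c) (C_mem_Asub c) g)
            = (a • g) - eAut i' (C c) (C_mem_Asub c) (a • g) := by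
          rw [map_smul, smul_sub]
        have hmem : a • (g - eAut i' (C c) (C_mem_Asub c) g) ∈ Asub k n i := by
          rw [heq]
          exact sub_mem (Subalgebra.smul_mem _ hg a)
            (shift_mem hlt c (Subalgebra.smul_mem _ hg a))
        refine ⟨hmem, ?_⟩
        rw [eAut_congr heq hmem
          (sub_mem (Subalgebra.smul_mem _ hg a) (shift_mem hlt c (Subalgebra.smul_mem _ hg a)))]
        exact stepA (a • g) (Subalgebra.smul_mem _ hg a) c
      | zero =>
        intro a
        refine ⟨by rw [smul_zero]; exact Subalgebra.zero_mem _, ?_⟩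
        rw [eAut_congr (smul_zero a) _ (Subalgebra.zero_mem _), eAut_zero]
        exact Subgroup.one_mem _
      | add x y _ _ hx hy =>
        intro a
        obtain ⟨h1, d1⟩ := hx a
        obtain ⟨h2, d2⟩ := hy a
        have heq : a • (x + y) = a • x + a • y := smul_add a x y
        refine ⟨by rw [heq]; exact add_mem h1 h2, ?_⟩
        rw [eAut_congr heq _ (add_mem h1 h2), ← eAut_mul i _ _ h1 h2]
        exact mul_mem d1 d2
      | smul a' x _ hx =>
        intro a
        obtain ⟨h1, d1⟩ := hx (a * a')
        have heq : a • (a' • x) = (a * a') • x := smul_smul a a' x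
        refine ⟨by rw [heq]; exact h1, ?_⟩
        rw [eAut_congr heq _ h1]
        exact d1
    -- Step C: every element of Asub i is in M0
    have stepC : ∀ g ∈ Asub k n i, g ∈ M0 := by
      intro g hg
      refine Submodule.span_le.mpr ?_ (Asub_le_mul_span hsucc hg)
      rintro q ⟨h, hh, j, rfl⟩
      have h2 := X_pow_mem_diff_span (k := k) i' j
      have h3 : h * X i' ^ j ∈ Submodule.map (LinearMap.mulLeft k h)
          (Submodule.span k {q : MvPolynomial (Fin n) k |
            ∃ (c : k) (d : ℕ), q = (X i' + C c) ^ d - X i' ^ d}) :=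
        ⟨_, h2, rfl⟩
      rw [Submodule.map_span] at h3
      refine Submodule.span_le.mpr ?_ h3
      rintro q ⟨r, ⟨c, d, rfl⟩, rfl⟩
      have hgmem : -(h * X i' ^ d) ∈ Asub k n i :=
        neg_mem (mul_mem (Asub_mono (by omega) hh) (pow_mem (X_mem_Asub hlt) d))
      refine Submodule.subset_span ⟨-(h * X i' ^ d), hgmem, c, ?_⟩
      have hfix : eAut i' (C c) (C_mem_Asub c) h = h := eAut_fix i' (C c) (C_mem_Asub c) hh
      rw [LinearMap.mulLeft_apply, map_neg, map_mul, map_pow, eAut_apply_X_self, hfix]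
      ring
    obtain ⟨h1, d1⟩ := stepB f (stepC f hf) 1
    rwa [eAut_congr (one_smul k f).symm hf h1]

variable (k) (n)

/-- The unipotent Jonquières subgroup is solvable of derived length exactly `n`. -/
theorem jonqU_derived_length [IsAlgClosed k] (hn : 1 ≤ n) :
    derivedSub (JonqU k n) n = ⊥ ∧ derivedSub (JonqU k n) (n - 1) ≠ ⊥ := by
  constructor
  · exact derived_n_eq_bot
  · intro hbot
    have hi : n - 1 < n := by omega
    have hone : (1 : MvPolynomial (Fin n) k) ∈ Asub k n (⟨n - 1, hi⟩ : Fin n) := one_mem _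
    have hmem := eAut_mem_derived (n - 1) (⟨n - 1, hi⟩ : Fin n) (le_of_eq rfl) 1 hone
    rw [hbot, Subgroup.mem_bot] at hmem
    have happ := congrArg (fun φ : MvPolynomial (Fin n) k ≃ₐ[k] MvPolynomial (Fin n) k
      => φ (X (⟨n - 1, hi⟩ : Fin n))) hmem
    simp only [eAut_apply_X_self] at happ
    have h0 : (1 : MvPolynomial (Fin n) k) = 0 := by
      have h2 : (X (⟨n - 1, hi⟩ : Fin n) : MvPolynomial (Fin n) k) + 1
          = X (⟨n - 1, hi⟩ : Fin n) + 0 := by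
        rw [add_zero]
        exact happ
      exact add_left_cancel h2
    exact one_ne_zero h0

end
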